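/- arXiv:2401.18064 — 2 statements merged into one kernel-verified Lean document; each statement's English description precedes it below -/
import Mathlib

section
/- For a MinHash function h drawn uniformly from random permutations of the universe, the probability that h(A) = h(B) for two nonempty finite sets A and B equals their Jaccard similarity |A ∩ B| / |A ∪ B|. -/
open Finset

namespace MinhashAux

variable {U : Type*} [Fintype U] [LinearOrder U] [DecidableEq U]

/-- Permutations for which `x` is the strict argmin of `π` over `C`. -/
def S (C : Finset U) (x : U) : Finset (Equiv.Perm U) :=
  univ.filter (fun π => ∀ z ∈ C, z ≠ x → π x < π z)

lemma mem_S {C : Finset U} {x : U} {π : Equiv.Perm U} :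
    π ∈ S C x ↔ ∀ z ∈ C, z ≠ x → π x < π z := by
  simp [S]

lemma S_card_eq (C : Finset U) {x y : U} (hx : x ∈ C) (hy : y ∈ C) :
    (S C x).card = (S C y).card := by
  rcases eq_or_ne x y with rfl | hxy
  · rfl
  apply Finset.card_bij' (fun π _ => π * Equiv.swap x y) (fun π _ => π * Equiv.swap x y)
  · intro π hπ
    rw [mem_S] at hπ ⊢
    intro z hz hzy
    rcases eq_or_ne z x with rfl | hzx
    · simpa [Equiv.swap_apply_left, Equiv.swap_apply_right] using hπ y hy (Ne.symm hxy)
    · have := hπ z hz hzx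
      simpa [Equiv.swap_apply_right, Equiv.swap_apply_of_ne_of_ne hzx hzy] using this
  · intro π hπ
    rw [mem_S] at hπ ⊢
    intro z hz hzx
    rcases eq_or_ne z y with rfl | hzy
    · simpa [Equiv.swap_apply_left, Equiv.swap_apply_right] using hπ x hx hxy
    · have := hπ z hz hzy
      simpa [Equiv.swap_apply_left, Equiv.swap_apply_of_ne_of_ne hzx hzy] using this
  · intro π _
    simp [mul_assoc]
  · intro π _
    simp [mul_assoc]

lemma exists_argmin (C : Finset U) (hC : C.Nonempty) (π : Equiv.Perm U) :
    ∃ x ∈ C, π ∈ S C x := by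
  obtain ⟨x, hxC, hxmin⟩ := mem_image.mp ((C.image fun z => π z).min'_mem (hC.image _))
  refine ⟨x, hxC, mem_S.mpr fun z hz hzx => ?_⟩
  have h1 : π x ≤ π z := hxmin ▸ min'_le _ _ (mem_image_of_mem _ hz)
  have h2 : π x ≠ π z := fun h => hzx (π.injective h).symm
  exact lt_of_le_of_ne h1 h2

lemma disjoint_S (C : Finset U) {x y : U} (hxC : x ∈ C) (hyC : y ∈ C) (hxy : x ≠ y) :
    Disjoint (S C x) (S C y) := by
  rw [Finset.disjoint_left]
  intro π hx hy
  exact absurd (mem_S.mp hy x hxC hxy) (not_lt.mpr (le_of_lt (mem_S.mp hx y hyC hxy.symm)))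



lemma min'_eq_of_mem {A : Finset U} (hA : A.Nonempty) {C : Finset U} (hAC : A ⊆ C)
    {x : U} (hxA : x ∈ A) {π : Equiv.Perm U} (hπ : π ∈ S C x) :
    (A.image fun z => π z).min' (hA.image _) = π x := by
  apply le_antisymm (min'_le _ _ (mem_image_of_mem _ hxA))
  obtain ⟨a, haA, ha⟩ := mem_image.mp ((A.image fun z => π z).min'_mem (hA.image _))
  rw [← ha]
  rcases eq_or_ne a x with rfl | hax
  · exact le_rfl
  · exact le_of_lt (mem_S.mp hπ a (hAC haA) hax)

end MinhashAux

open MinhashAux in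
/-- MinHash: for a uniformly random permutation `π` of a finite linearly
ordered universe `U`, the probability that the minimum of `π` over `A`
equals the minimum of `π` over `B` is the Jaccard similarity of `A` and `B`. -/
theorem minhash_collision_eq_jaccard {U : Type*} [Fintype U] [LinearOrder U]
    [DecidableEq U] (A B : Finset U) (hA : A.Nonempty) (hB : B.Nonempty) :
    (((Finset.univ : Finset (Equiv.Perm U)).filter
        (fun π : Equiv.Perm U =>
          ((A.image fun x => π x).min' (hA.image _) =
           (B.image fun x => π x).min' (hB.image _)))).card : ℝ)
      / (Fintype.card (Equiv.Perm U) : ℝ)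
    = ((A ∩ B).card : ℝ) / ((A ∪ B).card : ℝ) := by
  set C := A ∪ B with hCdef
  have hC : C.Nonempty := hA.mono subset_union_left
  obtain ⟨c, hc⟩ := hC
  have hC2 : C.Nonempty := ⟨c, hc⟩
  set N := (S C c).card with hN
  -- univ decomposes
  have huniv : (Finset.univ : Finset (Equiv.Perm U)) = C.biUnion (S C) := by
    ext π
    simp only [mem_univ, mem_biUnion, true_iff]
    exact exists_argmin C hC2 π
  have hcardU : Fintype.card (Equiv.Perm U) = C.card * N := by
    rw [Fintype.card, huniv, card_biUnion (fun x hx y hy hxy => disjoint_S C hx hy hxy)]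
    rw [Finset.sum_congr rfl (fun x hx => S_card_eq C hx hc), sum_const, smul_eq_mul]
  -- filter decomposes
  have hfil : (Finset.univ : Finset (Equiv.Perm U)).filter
        (fun π : Equiv.Perm U =>
          ((A.image fun x => π x).min' (hA.image _) =
           (B.image fun x => π x).min' (hB.image _)))
      = (A ∩ B).biUnion (S C) := by
    ext π
    simp only [mem_filter, mem_univ, true_and, mem_biUnion]
    constructor
    · intro heq
      obtain ⟨x, hxC, hπ⟩ := exists_argmin C hC2 π
      obtain ⟨a, haA, ha⟩ := mem_image.mp ((A.image fun z => π z).min'_mem (hA.image _))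
      obtain ⟨b, hbB, hb⟩ := mem_image.mp ((B.image fun z => π z).min'_mem (hB.image _))
      have hab : a = b := π.injective (by rw [ha, hb, heq])
      refine ⟨x, ?_, hπ⟩
      have hax : a = x := by
        by_contra hax
        have hlt : π x < π a := mem_S.mp hπ a (mem_union_left _ haA) hax
        rcases mem_union.mp hxC with hxA | hxB
        · exact absurd (min'_le _ (π x) (mem_image_of_mem _ hxA)) (not_le.mpr (ha ▸ hlt))
        · have hb' : π a = (B.image fun z => π z).min' (hB.image _) := by rw [hab, hb]
          exact absurd (min'_le _ (π x) (mem_image_of_mem _ hxB)) (not_le.mpr (hb' ▸ hlt))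
      exact hax ▸ mem_inter.mpr ⟨haA, hab ▸ hbB⟩
    · rintro ⟨x, hx, hπ⟩
      rw [min'_eq_of_mem hA subset_union_left (mem_inter.mp hx).1 hπ,
          min'_eq_of_mem hB subset_union_right (mem_inter.mp hx).2 hπ]
  have hcardF : ((Finset.univ : Finset (Equiv.Perm U)).filter
        (fun π : Equiv.Perm U =>
          ((A.image fun x => π x).min' (hA.image _) =
           (B.image fun x => π x).min' (hB.image _)))).card = (A ∩ B).card * N := by
    rw [hfil, card_biUnion]
    · rw [Finset.sum_congr rfl
        (fun x hx => S_card_eq C (mem_union_left _ (mem_of_mem_inter_left hx)) hc),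
        sum_const, smul_eq_mul]
    · intro x hx y hy hxy
      exact disjoint_S C (mem_union_left _ (mem_of_mem_inter_left hx))
        (mem_union_left _ (mem_of_mem_inter_left hy)) hxy
  rw [hcardF, hcardU]
  have hNne : (N : ℝ) ≠ 0 := by
    have hpos : 0 < Fintype.card (Equiv.Perm U) := Fintype.card_pos
    rw [hcardU] at hpos
    rcases Nat.eq_zero_or_pos N with h | h
    · rw [h, mul_zero] at hpos; exact absurd hpos (lt_irrefl 0)
    · exact_mod_cast h.ne'
  push_cast
  rw [mul_div_mul_right _ _ hNne]
end

section
/- The Jaccard distance d(A,B) = 1 - |A ∩ B|/|A ∪ B| (with d(∅,∅)=0) satisfies the triangle inequality on finite sets. -/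
noncomputable def jaccardDist {α : Type*} [DecidableEq α] (A B : Finset α) : ℝ :=
  if (A ∪ B) = ∅ then 0 else 1 - ((A ∩ B).card : ℝ) / ((A ∪ B).card : ℝ)

lemma jaccardDist_nonneg {α : Type*} [DecidableEq α] (A B : Finset α) :
    0 ≤ jaccardDist A B := by
  unfold jaccardDist
  split_ifs with h
  · exact le_rfl
  · have hpos : 0 < ((A ∪ B).card : ℝ) := by
      exact_mod_cast Finset.card_pos.mpr (Finset.nonempty_of_ne_empty h)
    have hle : ((A ∩ B).card : ℝ) ≤ ((A ∪ B).card : ℝ) := by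
      exact_mod_cast Finset.card_le_card (Finset.inter_subset_union)
    have := (div_le_one hpos).mpr hle
    linarith

set_option maxHeartbeats 1000000 in
lemma jaccard_key (a b c p q r t : ℕ) :
    (a+c+p+r) * ((a+b+p+q+r+t)*(b+c+p+q+r+t))
      ≤ ((a+b+q+r)*(b+c+p+q+r+t) + (b+c+p+q)*(a+b+p+q+r+t)) * (a+c+p+q+r+t) := by
  have h : ((a+b+q+r)*(b+c+p+q+r+t) + (b+c+p+q)*(a+b+p+q+r+t)) * (a+c+p+q+r+t)
      = (a+c+p+r) * ((a+b+p+q+r+t)*(b+c+p+q+r+t)) +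
      (2*q*t*t + 4*q*r*t + 2*q*r*r + 4*q*q*t + 4*q*q*r + 2*q*q*q + 4*p*q*t + 4*p*q*r
      + 4*p*q*q + 2*p*p*q + c*r*t + c*r*r + 3*c*q*t + 4*c*q*r + 3*c*q*q + c*p*r
      + 3*c*p*q + c*c*r + c*c*q + 2*b*t*t + 3*b*r*t + b*r*r + 6*b*q*t + 5*b*q*r
      + 4*b*q*q + 3*b*p*t + 2*b*p*r + 5*b*p*q + b*p*p + 2*b*c*t + 2*b*c*r + 4*b*c*q
      + 2*b*c*p + b*c*c + 2*b*b*t + b*b*r + 2*b*b*q + b*b*p + b*b*c + 3*a*q*t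
      + 3*a*q*r + 3*a*q*q + a*p*t + a*p*r + 4*a*p*q + a*p*p + 2*a*c*t + 2*a*c*r
      + 4*a*c*q + 2*a*c*p + a*c*c + 2*a*b*t + 2*a*b*r + 4*a*b*q + 2*a*b*p + 2*a*b*c
      + a*b*b + a*a*q + a*a*p + a*a*c + a*a*b) := by ring
  rw [h]
  exact Nat.le_add_right _ _

/-- The Jaccard distance satisfies the triangle inequality on finite sets. -/
theorem jaccardDist_triangle {α : Type*} [DecidableEq α] (A B C : Finset α) :
    jaccardDist A C ≤ jaccardDist A B + jaccardDist B C := by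
  by_cases hab : A ∪ B = ∅
  · obtain ⟨hA, hB⟩ := Finset.union_eq_empty.mp hab
    rw [hA, hB]
    have h0 : jaccardDist (∅ : Finset α) ∅ = 0 := by
      simp [jaccardDist]
    rw [h0]
    linarith
  by_cases hbc : B ∪ C = ∅
  · obtain ⟨hB, hC⟩ := Finset.union_eq_empty.mp hbc
    rw [hB, hC]
    have h0 : jaccardDist (∅ : Finset α) ∅ = 0 := by
      simp [jaccardDist]
    rw [h0]
    linarith
  by_cases hac : A ∪ C = ∅
  · have h0 : jaccardDist A C = 0 := by
      simp only [jaccardDist, if_pos hac]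
    rw [h0]
    exact add_nonneg (jaccardDist_nonneg A B) (jaccardDist_nonneg B C)
  -- main case
  obtain ⟨a, ha⟩ : ∃ n, (A \ (B ∪ C)).card = n := ⟨_, rfl⟩
  obtain ⟨b, hb⟩ : ∃ n, (B \ (A ∪ C)).card = n := ⟨_, rfl⟩
  obtain ⟨c, hc⟩ : ∃ n, (C \ (A ∪ B)).card = n := ⟨_, rfl⟩
  obtain ⟨p, hp⟩ : ∃ n, ((A ∩ B) \ C).card = n := ⟨_, rfl⟩
  obtain ⟨q, hq⟩ : ∃ n, ((A ∩ C) \ B).card = n := ⟨_, rfl⟩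
  obtain ⟨r, hr⟩ : ∃ n, ((B ∩ C) \ A).card = n := ⟨_, rfl⟩
  obtain ⟨t, ht⟩ : ∃ n, (A ∩ B ∩ C).card = n := ⟨_, rfl⟩
  have hiAB : (A ∩ B).card = p + t := by
    have h0 := Finset.card_sdiff_add_card_inter (A ∩ B) C
    rw [hp, ht] at h0
    omega
  have hiAC : (A ∩ C).card = q + t := by
    have e : (A ∩ C) ∩ B = A ∩ B ∩ C := by
      ext x; simp only [Finset.mem_inter]; tauto
    have h0 := Finset.card_sdiff_add_card_inter (A ∩ C) B
    rw [e, hq, ht] at h0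
    omega
  have hiBC : (B ∩ C).card = r + t := by
    have e : (B ∩ C) ∩ A = A ∩ B ∩ C := by
      ext x; simp only [Finset.mem_inter]; tauto
    have h0 := Finset.card_sdiff_add_card_inter (B ∩ C) A
    rw [e, hr, ht] at h0
    omega
  have hcA : A.card = a + p + q + t := by
    have h1 := Finset.card_sdiff_add_card_inter A (B ∪ C)
    have h2 : A ∩ (B ∪ C) = (A ∩ B) ∪ (A ∩ C) := Finset.inter_union_distrib_left A B C
    have h3 := Finset.card_union_add_card_inter (A ∩ B) (A ∩ C)
    have e : (A ∩ B) ∩ (A ∩ C) = A ∩ B ∩ C := by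
      ext x; simp only [Finset.mem_inter]; tauto
    rw [e, ht, hiAB, hiAC] at h3
    rw [h2, ha] at h1
    omega
  have hcB : B.card = b + p + r + t := by
    have h1 := Finset.card_sdiff_add_card_inter B (A ∪ C)
    have h2 : B ∩ (A ∪ C) = (B ∩ A) ∪ (B ∩ C) := Finset.inter_union_distrib_left B A C
    have h3 := Finset.card_union_add_card_inter (B ∩ A) (B ∩ C)
    have e : (B ∩ A) ∩ (B ∩ C) = A ∩ B ∩ C := by
      ext x; simp only [Finset.mem_inter]; tauto
    rw [e, ht, Finset.inter_comm B A, hiAB, hiBC] at h3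
    rw [h2, hb, Finset.inter_comm B A] at h1
    omega
  have hcC : C.card = c + q + r + t := by
    have h1 := Finset.card_sdiff_add_card_inter C (A ∪ B)
    have h2 : C ∩ (A ∪ B) = (C ∩ A) ∪ (C ∩ B) := Finset.inter_union_distrib_left C A B
    have h3 := Finset.card_union_add_card_inter (C ∩ A) (C ∩ B)
    have e : (C ∩ A) ∩ (C ∩ B) = A ∩ B ∩ C := by
      ext x; simp only [Finset.mem_inter]; tauto
    rw [e, ht, Finset.inter_comm C A, hiAC, Finset.inter_comm C B, hiBC] at h3
    rw [h2, hc, Finset.inter_comm C A, Finset.inter_comm C B] at h1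
    omega
  have huAB : (A ∪ B).card = a + b + p + q + r + t := by
    have := Finset.card_union_add_card_inter A B
    omega
  have huAC : (A ∪ C).card = a + c + p + q + r + t := by
    have := Finset.card_union_add_card_inter A C
    omega
  have huBC : (B ∪ C).card = b + c + p + q + r + t := by
    have := Finset.card_union_add_card_inter B C
    omega
  have hposAB : 0 < a + b + p + q + r + t := by
    rw [← huAB]; exact Finset.card_pos.mpr (Finset.nonempty_of_ne_empty hab)
  have hposAC : 0 < a + c + p + q + r + t := by
    rw [← huAC]; exact Finset.card_pos.mpr (Finset.nonempty_of_ne_empty hac)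
  have hposBC : 0 < b + c + p + q + r + t := by
    rw [← huBC]; exact Finset.card_pos.mpr (Finset.nonempty_of_ne_empty hbc)
  simp only [jaccardDist, if_neg hab, if_neg hbc, if_neg hac]
  rw [hiAB, hiAC, hiBC, huAB, huAC, huBC]
  push_cast
  have hAB : (0:ℝ) < (a:ℝ) + b + p + q + r + t := by exact_mod_cast hposAB
  have hAC : (0:ℝ) < (a:ℝ) + c + p + q + r + t := by exact_mod_cast hposAC
  have hBC : (0:ℝ) < (b:ℝ) + c + p + q + r + t := by exact_mod_cast hposBC
  have e1 : 1 - ((q:ℝ) + t) / ((a:ℝ) + c + p + q + r + t)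
      = ((a:ℝ) + c + p + r) / ((a:ℝ) + c + p + q + r + t) := by
    field_simp
    try ring
  have e2 : 1 - ((p:ℝ) + t) / ((a:ℝ) + b + p + q + r + t)
      = ((a:ℝ) + b + q + r) / ((a:ℝ) + b + p + q + r + t) := by
    field_simp
    try ring
  have e3 : 1 - ((r:ℝ) + t) / ((b:ℝ) + c + p + q + r + t)
      = ((b:ℝ) + c + p + q) / ((b:ℝ) + c + p + q + r + t) := by
    field_simp
    try ring
  rw [e1, e2, e3, div_add_div _ _ (ne_of_gt hAB) (ne_of_gt hBC),
    div_le_div_iff₀ hAC (mul_pos hAB hBC)]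
  have keyR : ((a:ℝ)+c+p+r) * (((a:ℝ)+b+p+q+r+t)*((b:ℝ)+c+p+q+r+t))
      ≤ (((a:ℝ)+b+q+r)*((b:ℝ)+c+p+q+r+t) + ((b:ℝ)+c+p+q)*((a:ℝ)+b+p+q+r+t))
        * ((a:ℝ)+c+p+q+r+t) := by exact_mod_cast jaccard_key a b c p q r t
  linarith [keyR]
end
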